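/- Let ξ_1, …, ξ_n ∈ ℝ^d, let Σ̂_υ be a d×d real symmetric positive definite matrix with operator norm s = ‖Σ̂_υ‖, and let λ ≥ 0. Define ξ̃_i = Σ̂_υ^{-1/2} ξ_i, Σ̃ = (1/n) ∑_{i=1}^n ξ̃_i ξ̃_iᵀ, and Σ̂_ξ = (1/n) ∑_{i=1}^n ξ_i ξ_iᵀ. Assume λ_min(Σ̃) ≥ ℓ for some ℓ > 0, and let G be a d×d real symmetric matrix with ‖G‖ ≤ (ℓ + λ/s)/2. Then Σ̂_ξ + λI and Σ̃ + λΣ̂_υ^{-1} + G are invertible and ‖Σ̂_υ^{-1/2} (Σ̃ + λΣ̂_υ^{-1} + G)^{-1} Σ̂_υ^{-1/2} − (Σ̂_ξ + λI)^{-1}‖ ≤ 2‖Σ̂_υ^{-1}‖·‖G‖ / (ℓ² + λ²/s²). (Deterministic core of the original-domain inverse-error bound, Eq. (6) in Theorem 3.4.) -/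

import Mathlib

open Matrix

/-- Operator norm of a square real matrix induced by the Euclidean norm. -/
noncomputable def matOpNorm {d : ℕ} (A : Matrix (Fin d) (Fin d) ℝ) : ℝ :=
  ‖Matrix.toEuclideanCLM (𝕜 := ℝ) A‖

/-- Euclidean norm of a vector in ℝ^d. -/
noncomputable def vnorm {d : ℕ} (v : Fin d → ℝ) : ℝ :=
  Real.sqrt (∑ i, (v i) ^ 2)

/-- Frobenius norm of a square real matrix. -/
noncomputable def frobNorm {d : ℕ} (A : Matrix (Fin d) (Fin d) ℝ) : ℝ :=
  Real.sqrt (∑ i, ∑ j, (A i j) ^ 2)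

/-- Inverse of the (unique symmetric positive definite) square root of a
positive definite matrix: `M^{-1/2}`. -/
noncomputable def pdInvSqrt {d : ℕ} {M : Matrix (Fin d) (Fin d) ℝ} (hM : M.PosDef) :
    Matrix (Fin d) (Fin d) ℝ :=
  (hM.posSemidef.1.eigenvectorUnitary.1 *
      diagonal ((RCLike.ofReal : ℝ → ℝ) ∘ Real.sqrt ∘ hM.posSemidef.1.eigenvalues) *
      (star hM.posSemidef.1.eigenvectorUnitary : Matrix (Fin d) (Fin d) ℝ))⁻¹

/-- Smallest eigenvalue of a real symmetric matrix, via the Rayleigh quotient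
(infimum of `vᵀ A v` over Euclidean-unit vectors `v`). -/
noncomputable def lamMin {d : ℕ} (A : Matrix (Fin d) (Fin d) ℝ) : ℝ :=
  ⨅ v : {v : Fin d → ℝ // ∑ i, (v i) ^ 2 = 1}, dotProduct v.1 (A *ᵥ v.1)

/-- Largest eigenvalue of a real symmetric matrix, via the Rayleigh quotient
(supremum of `vᵀ A v` over Euclidean-unit vectors `v`). -/
noncomputable def lamMax {d : ℕ} (A : Matrix (Fin d) (Fin d) ℝ) : ℝ :=
  ⨆ v : {v : Fin d → ℝ // ∑ i, (v i) ^ 2 = 1}, dotProduct v.1 (A *ᵥ v.1)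

/-- Loewner order on real symmetric matrices: `A ⪯ B` iff `B - A` is positive
semidefinite. -/
def loewnerLE {d : ℕ} (A B : Matrix (Fin d) (Fin d) ℝ) : Prop :=
  (B - A).PosSemidef

/-!
Write `Q = Σ̂_υ^{-1/2}` and `B = Σ̃ + λ Σ̂_υ⁻¹`. Whitening gives `B = Q (Σ̂_ξ + λ I) Q`, so the
error is `Q ((B + G)⁻¹ - B⁻¹) Q`, whose norm is at most `‖Q Q‖ = ‖Σ̂_υ⁻¹‖` times that of the
middle factor. Since `xᵀ Σ̂_υ⁻¹ x ≥ |x|² / s`, the quadratic form of `B` dominates `c |x|²` with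
`c = ℓ + λ / s`, and the one of `B + G` dominates `c |x|² / 2`. A matrix whose quadratic form
dominates `c |x|²` is invertible with inverse of norm at most `c⁻¹`, so the resolvent identity
`(B + G)⁻¹ - B⁻¹ = -(B + G)⁻¹ G B⁻¹` bounds the middle factor by `2 ‖G‖ / c²`; finally
`c² ≥ ℓ² + λ² / s²`.
-/

open scoped MatrixOrder Matrix.Norms.L2Operator RealInnerProductSpace

namespace Matrix

section CommSemiring

variable {α ι κ m n : Type*} [CommSemiring α] [Fintype ι] [Fintype κ]

lemma vecMulVec_mulVec_mulVec (Q : Matrix m ι α) (P : Matrix n κ α) (u : ι → α) (v : κ → α) :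
    vecMulVec (Q *ᵥ u) (P *ᵥ v) = Q * vecMulVec u v * Pᵀ := by
  rw [mul_vecMulVec, vecMulVec_mul, vecMul_transpose]

lemma sum_vecMulVec_mulVec_self (Q : Matrix m ι α) (v : κ → ι → α) :
    ∑ i, vecMulVec (Q *ᵥ v i) (Q *ᵥ v i) = Q * (∑ i, vecMulVec (v i) (v i)) * Qᵀ := by
  simp only [vecMulVec_mulVec_mulVec, Matrix.mul_sum, Matrix.sum_mul]

end CommSemiring

variable {ι : Type*} [Fintype ι]

lemma IsHermitian.mulVec_dotProduct {S : Matrix ι ι ℝ} (hS : S.IsHermitian) (u v : ι → ℝ) :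
    (S *ᵥ u) ⬝ᵥ v = u ⬝ᵥ (S *ᵥ v) := by
  rw [dotProduct_mulVec, ← vecMul_transpose, ← conjTranspose_eq_transpose_of_trivial, hS.eq]

lemma dotProduct_eq_inner_toLp (x y : ι → ℝ) : x ⬝ᵥ y = ⟪WithLp.toLp 2 x, WithLp.toLp 2 y⟫ := by
  rw [EuclideanSpace.inner_toLp_toLp, star_trivial, dotProduct_comm]

lemma dotProduct_self_eq_norm_toLp_sq (x : ι → ℝ) : x ⬝ᵥ x = ‖WithLp.toLp 2 x‖ ^ 2 := by
  rw [dotProduct_eq_inner_toLp, real_inner_self_eq_norm_sq]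

lemma dotProduct_self_nonneg (x : ι → ℝ) : 0 ≤ x ⬝ᵥ x := by
  rw [dotProduct_self_eq_norm_toLp_sq]; positivity

lemma mul_norm_toLp_le_of_coercive {A : Matrix ι ι ℝ} {c : ℝ}
    (hA : ∀ x, c * (x ⬝ᵥ x) ≤ x ⬝ᵥ (A *ᵥ x)) (x : ι → ℝ) :
    c * ‖WithLp.toLp 2 x‖ ≤ ‖WithLp.toLp 2 (A *ᵥ x)‖ := by
  rcases (norm_nonneg (WithLp.toLp 2 x)).eq_or_lt with h0 | hpos
  · rw [← h0, mul_zero]; exact norm_nonneg _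
  refine le_of_mul_le_mul_right ?_ hpos
  calc c * ‖WithLp.toLp 2 x‖ * ‖WithLp.toLp 2 x‖ = c * (x ⬝ᵥ x) := by
        rw [dotProduct_self_eq_norm_toLp_sq]; ring
    _ ≤ x ⬝ᵥ (A *ᵥ x) := hA x
    _ ≤ ‖WithLp.toLp 2 x‖ * ‖WithLp.toLp 2 (A *ᵥ x)‖ := by
        rw [dotProduct_eq_inner_toLp]; exact real_inner_le_norm _ _
    _ = _ := mul_comm _ _

variable [DecidableEq ι]

lemma dotProduct_mulVec_le_norm_mul (A : Matrix ι ι ℝ) (x : ι → ℝ) :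
    x ⬝ᵥ (A *ᵥ x) ≤ ‖A‖ * (x ⬝ᵥ x) :=
  calc x ⬝ᵥ (A *ᵥ x) ≤ ‖WithLp.toLp 2 x‖ * ‖WithLp.toLp 2 (A *ᵥ x)‖ := by
        rw [dotProduct_eq_inner_toLp]; exact real_inner_le_norm _ _
    _ ≤ ‖WithLp.toLp 2 x‖ * (‖A‖ * ‖WithLp.toLp 2 x‖) := by
        gcongr; exact l2_opNorm_mulVec A (WithLp.toLp 2 x)
    _ = ‖A‖ * (x ⬝ᵥ x) := by rw [dotProduct_self_eq_norm_toLp_sq]; ring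

lemma isUnit_of_coercive {A : Matrix ι ι ℝ} {c : ℝ} (hc : 0 < c)
    (hA : ∀ x, c * (x ⬝ᵥ x) ≤ x ⬝ᵥ (A *ᵥ x)) : IsUnit A := by
  refine mulVec_injective_iff_isUnit.1 fun x y hxy => ?_
  have h := mul_norm_toLp_le_of_coercive hA (x - y)
  rw [mulVec_sub, hxy, sub_self, WithLp.toLp_zero, norm_zero] at h
  have hxy0 : ‖WithLp.toLp 2 (x - y)‖ = 0 :=
    le_antisymm (nonpos_of_mul_nonpos_right h hc) (norm_nonneg _)
  rw [norm_eq_zero, WithLp.toLp_eq_zero] at hxy0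
  exact sub_eq_zero.1 hxy0

lemma norm_inv_le_of_coercive {A : Matrix ι ι ℝ} {c : ℝ} (hc : 0 < c)
    (hA : ∀ x, c * (x ⬝ᵥ x) ≤ x ⬝ᵥ (A *ᵥ x)) : ‖A⁻¹‖ ≤ c⁻¹ := by
  have hdet := (isUnit_iff_isUnit_det A).1 (isUnit_of_coercive hc hA)
  rw [cstar_norm_def]
  refine ContinuousLinearMap.opNorm_le_bound _ (inv_nonneg.2 hc.le) fun z => ?_
  have h := mul_norm_toLp_le_of_coercive hA (A⁻¹ *ᵥ WithLp.ofLp z)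
  rw [mulVec_mulVec, mul_nonsing_inv A hdet, one_mulVec] at h
  exact (le_inv_mul_iff₀ hc).2 h

lemma isUnit_add_and_norm_inv_add_sub_inv_le {B G : Matrix ι ι ℝ} {c : ℝ} (hc : 0 < c)
    (hB : ∀ x, c * (x ⬝ᵥ x) ≤ x ⬝ᵥ (B *ᵥ x)) (hG : ‖G‖ ≤ c / 2) :
    IsUnit (B + G) ∧ ‖(B + G)⁻¹ - B⁻¹‖ ≤ 2 * ‖G‖ / c ^ 2 := by
  have hBG : ∀ x, c / 2 * (x ⬝ᵥ x) ≤ x ⬝ᵥ ((B + G) *ᵥ x) := fun x => by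
    have hGx := dotProduct_mulVec_le_norm_mul (-G) x
    rw [norm_neg, neg_mulVec, dotProduct_neg] at hGx
    rw [add_mulVec, dotProduct_add]
    nlinarith [hB x, dotProduct_self_nonneg x]
  have hc2 : 0 < c / 2 := half_pos hc
  refine ⟨isUnit_of_coercive hc2 hBG, ?_⟩
  rw [inv_sub_inv (iff_of_true (isUnit_of_coercive hc2 hBG) (isUnit_of_coercive hc hB)),
    sub_add_cancel_left, mul_neg, neg_mul, norm_neg]
  calc ‖(B + G)⁻¹ * G * B⁻¹‖ ≤ ‖(B + G)⁻¹‖ * ‖G‖ * ‖B⁻¹‖ := norm_mul₃_le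
    _ ≤ (c / 2)⁻¹ * ‖G‖ * c⁻¹ := by
        gcongr
        exacts [norm_inv_le_of_coercive hc2 hBG, norm_inv_le_of_coercive hc hB]
    _ = 2 * ‖G‖ / c ^ 2 := by field_simp

lemma IsHermitian.norm_mul_mul_self_le {Q : Matrix ι ι ℝ} (hQ : Q.IsHermitian)
    (X : Matrix ι ι ℝ) :
    ‖Q * X * Q‖ ≤ ‖Q * Q‖ * ‖X‖ := by
  calc ‖Q * X * Q‖ ≤ ‖Q‖ * ‖X‖ * ‖Q‖ := norm_mul₃_le
    _ = ‖Qᴴ * Q‖ * ‖X‖ := by rw [l2_opNorm_conjTranspose_mul_self]; ring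
    _ = ‖Q * Q‖ * ‖X‖ := by rw [hQ.eq]

lemma mul_inv_mul_mul_mul_cancel {Q : Matrix ι ι ℝ} (hQ : IsUnit Q) (A : Matrix ι ι ℝ) :
    Q * (Q * A * Q)⁻¹ * Q = A⁻¹ := by
  have hdet := (isUnit_iff_isUnit_det Q).1 hQ
  simp only [mul_inv_rev, Matrix.mul_assoc, nonsing_inv_mul Q hdet, Matrix.mul_one,
    mul_nonsing_inv_cancel_left _ _ hdet]

lemma isUnit_of_isUnit_mul_mul_self {Q A : Matrix ι ι ℝ} (h : IsUnit (Q * A * Q)) : IsUnit A := by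
  rw [isUnit_iff_isUnit_det, det_mul, det_mul] at h
  exact (isUnit_iff_isUnit_det A).2 (isUnit_of_mul_isUnit_right (isUnit_of_mul_isUnit_left h))

lemma isHermitian_sqrt (M : Matrix ι ι ℝ) : (CFC.sqrt M).IsHermitian :=
  (nonneg_iff_posSemidef.1 (CFC.sqrt_nonneg M)).isHermitian

namespace PosDef

variable {M : Matrix ι ι ℝ} (hM : M.PosDef)
include hM

lemma sqrt_mul_sqrt_self : CFC.sqrt M * CFC.sqrt M = M :=
  CFC.sqrt_mul_sqrt_self M hM.posSemidef.nonneg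

lemma isUnit_sqrt : IsUnit (CFC.sqrt M) :=
  (CFC.isUnit_sqrt_iff M hM.posSemidef.nonneg).2 hM.isUnit

lemma inv_norm_mul_dotProduct_self_le (x : ι → ℝ) :
    ‖M‖⁻¹ * (x ⬝ᵥ x) ≤ x ⬝ᵥ (M⁻¹ *ᵥ x) := by
  set S := CFC.sqrt M
  have hS : S.IsHermitian := isHermitian_sqrt M
  set y := S⁻¹ *ᵥ x
  have hx : S *ᵥ y = x := by
    rw [mulVec_mulVec, mul_nonsing_inv _ ((isUnit_iff_isUnit_det S).1 hM.isUnit_sqrt), one_mulVec]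
  have hxx : x ⬝ᵥ x = y ⬝ᵥ (M *ᵥ y) := by
    rw [← hx, hS.mulVec_dotProduct, mulVec_mulVec, hM.sqrt_mul_sqrt_self]
  have hMinv : x ⬝ᵥ (M⁻¹ *ᵥ x) = y ⬝ᵥ y := by
    rw [← hM.sqrt_mul_sqrt_self, mul_inv_rev, ← mulVec_mulVec, ← hS.inv.mulVec_dotProduct]
  rw [hMinv]
  exact inv_mul_le_of_le_mul₀ (norm_nonneg M) (dotProduct_self_nonneg y)
    (hxx ▸ dotProduct_mulVec_le_norm_mul M y)

end PosDef

section pdInvSqrt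

variable {d : ℕ} {M : Matrix (Fin d) (Fin d) ℝ} (hM : M.PosDef)
include hM

lemma pdInvSqrt_eq_inv_sqrt : pdInvSqrt hM = (CFC.sqrt M)⁻¹ := by
  rw [CFC.sqrt_eq_cfc, cfc_nnreal_eq_real _ M, hM.posSemidef.1.cfc_eq]
  simp [pdInvSqrt, IsHermitian.cfc, Function.comp_def, hM.posSemidef.eigenvalues_nonneg]

lemma isHermitian_pdInvSqrt : (pdInvSqrt hM).IsHermitian := by
  rw [pdInvSqrt_eq_inv_sqrt]; exact (isHermitian_sqrt M).inv

lemma transpose_pdInvSqrt : (pdInvSqrt hM)ᵀ = pdInvSqrt hM := by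
  rw [← conjTranspose_eq_transpose_of_trivial, (isHermitian_pdInvSqrt hM).eq]

lemma pdInvSqrt_mul_self : pdInvSqrt hM * pdInvSqrt hM = M⁻¹ := by
  rw [pdInvSqrt_eq_inv_sqrt, ← mul_inv_rev, hM.sqrt_mul_sqrt_self]

lemma isUnit_pdInvSqrt : IsUnit (pdInvSqrt hM) := by
  rw [pdInvSqrt_eq_inv_sqrt, isUnit_nonsing_inv_iff]; exact hM.isUnit_sqrt

lemma smul_sum_vecMulVec_pdInvSqrt_add_smul_inv {κ : Type*} [Fintype κ] (a lam : ℝ)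
    (v : κ → Fin d → ℝ) :
    a • ∑ i, vecMulVec (pdInvSqrt hM *ᵥ v i) (pdInvSqrt hM *ᵥ v i) + lam • M⁻¹ =
      pdInvSqrt hM * (a • ∑ i, vecMulVec (v i) (v i) + lam • 1) * pdInvSqrt hM := by
  simp only [sum_vecMulVec_mulVec_self, transpose_pdInvSqrt, ← pdInvSqrt_mul_self hM,
    Matrix.mul_add, Matrix.add_mul, Matrix.mul_smul, Matrix.smul_mul, Matrix.mul_one]

end pdInvSqrt

lemma mul_dotProduct_self_le_of_le_lamMin {d : ℕ} {A : Matrix (Fin d) (Fin d) ℝ} {l : ℝ}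
    (h : l ≤ lamMin A) (x : Fin d → ℝ) : l * (x ⬝ᵥ x) ≤ x ⬝ᵥ (A *ᵥ x) := by
  have hsum (v : Fin d → ℝ) : ∑ i, v i ^ 2 = v ⬝ᵥ v := by simp [dotProduct, sq]
  rcases eq_or_ne x 0 with rfl | hx
  · simp
  have hxx : 0 < x ⬝ᵥ x :=
    lt_of_le_of_ne (dotProduct_self_nonneg x) (Ne.symm (dotProduct_self_eq_zero.not.2 hx))
  have hbdd : BddBelow (Set.range fun v : {v : Fin d → ℝ // ∑ i, v i ^ 2 = 1} =>
      v.1 ⬝ᵥ (A *ᵥ v.1)) := by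
    refine ⟨-‖A‖, ?_⟩
    rintro _ ⟨v, rfl⟩
    have hv := dotProduct_mulVec_le_norm_mul (-A) v.1
    rw [norm_neg, neg_mulVec, dotProduct_neg, ← hsum, v.2] at hv
    linarith
  set r := Real.sqrt (x ⬝ᵥ x)
  have hr : r ^ 2 = x ⬝ᵥ x := Real.sq_sqrt hxx.le
  have hunit : ∑ i, (r⁻¹ • x) i ^ 2 = 1 := by
    rw [hsum, dotProduct_smul, smul_dotProduct, smul_smul, smul_eq_mul, ← sq, inv_pow, hr,
      inv_mul_cancel₀ hxx.ne']
  have hle := h.trans (ciInf_le hbdd ⟨r⁻¹ • x, hunit⟩)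
  rw [mulVec_smul, dotProduct_smul, smul_dotProduct, smul_smul, smul_eq_mul, ← sq, inv_pow,
    hr] at hle
  rwa [le_inv_mul_iff₀ hxx, mul_comm] at hle

lemma mul_dotProduct_self_le_add_smul_inv {d : ℕ} {A M : Matrix (Fin d) (Fin d) ℝ} {l lam : ℝ}
    (hA : l ≤ lamMin A) (hM : M.PosDef) (hlam : 0 ≤ lam) (x : Fin d → ℝ) :
    (l + lam / ‖M‖) * (x ⬝ᵥ x) ≤ x ⬝ᵥ ((A + lam • M⁻¹) *ᵥ x) := by
  have hAx := mul_dotProduct_self_le_of_le_lamMin hA x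
  have hMx := mul_le_mul_of_nonneg_left (hM.inv_norm_mul_dotProduct_self_le x) hlam
  rw [add_mulVec, dotProduct_add, smul_mulVec, dotProduct_smul, smul_eq_mul]
  calc (l + lam / ‖M‖) * (x ⬝ᵥ x) = l * (x ⬝ᵥ x) + lam * (‖M‖⁻¹ * (x ⬝ᵥ x)) := by ring
    _ ≤ _ := add_le_add hAx hMx

end Matrix

theorem stmt4_general {d n : ℕ} (ξ : Fin n → Fin d → ℝ)
    (Sv : Matrix (Fin d) (Fin d) ℝ) (hSv : Sv.PosDef) (lam : ℝ) (hlam : 0 ≤ lam)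
    (G : Matrix (Fin d) (Fin d) ℝ) (l : ℝ) (hl : 0 < l) :
    let ξt : Fin n → Fin d → ℝ := fun i => pdInvSqrt hSv *ᵥ ξ i
    let St : Matrix (Fin d) (Fin d) ℝ :=
      (1 / (n : ℝ)) • ∑ i, Matrix.vecMulVec (ξt i) (ξt i)
    let Sξ : Matrix (Fin d) (Fin d) ℝ :=
      (1 / (n : ℝ)) • ∑ i, Matrix.vecMulVec (ξ i) (ξ i)
    l ≤ lamMin St → matOpNorm G ≤ (l + lam / matOpNorm Sv) / 2 →
      IsUnit (Sξ + lam • 1) ∧ IsUnit (St + lam • Sv⁻¹ + G) ∧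
        matOpNorm (pdInvSqrt hSv * (St + lam • Sv⁻¹ + G)⁻¹ * pdInvSqrt hSv -
            (Sξ + lam • 1)⁻¹) ≤
          2 * matOpNorm Sv⁻¹ * matOpNorm G / (l ^ 2 + lam ^ 2 / matOpNorm Sv ^ 2) := by
  intro ξt St Sξ hSt hG
  have hconj : St + lam • Sv⁻¹ = pdInvSqrt hSv * (Sξ + lam • 1) * pdInvSqrt hSv :=
    smul_sum_vecMulVec_pdInvSqrt_add_smul_inv hSv _ _ ξ
  clear_value ξt St Sξ
  simp only [matOpNorm, ← cstar_norm_def] at hG ⊢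
  set c := l + lam / ‖Sv‖
  have hcoer := mul_dotProduct_self_le_add_smul_inv hSt hSv hlam
  have hc : 0 < c := by positivity
  obtain ⟨hBG, hdiff⟩ := isUnit_add_and_norm_inv_add_sub_inv_le hc hcoer hG
  have hB := isUnit_of_coercive hc hcoer
  rw [hconj] at hB
  refine ⟨isUnit_of_isUnit_mul_mul_self hB, hBG, ?_⟩
  rw [← mul_inv_mul_mul_mul_cancel (isUnit_pdInvSqrt hSv) (Sξ + lam • 1), ← hconj,
    ← Matrix.sub_mul, ← Matrix.mul_sub]
  calc _ ≤ ‖pdInvSqrt hSv * pdInvSqrt hSv‖ * ‖(St + lam • Sv⁻¹ + G)⁻¹ - (St + lam • Sv⁻¹)⁻¹‖ :=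
        (isHermitian_pdInvSqrt hSv).norm_mul_mul_self_le _
    _ ≤ ‖Sv⁻¹‖ * (2 * ‖G‖ / c ^ 2) := by
      rw [pdInvSqrt_mul_self]; exact mul_le_mul_of_nonneg_left hdiff (norm_nonneg _)
    _ = 2 * ‖Sv⁻¹‖ * ‖G‖ / c ^ 2 := by ring
    _ ≤ 2 * ‖Sv⁻¹‖ * ‖G‖ / (l ^ 2 + lam ^ 2 / ‖Sv‖ ^ 2) := by
      gcongr
      rw [← div_pow]; nlinarith [div_nonneg hlam (norm_nonneg Sv)]

/-- deterministic core of Eq. (6) in Theorem 3.4: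
original-domain inverse-error bound after the PMT transformation. -/
theorem stmt4 {d n : ℕ} (hn : 0 < n) (ξ : Fin n → Fin d → ℝ)
    (Sv : Matrix (Fin d) (Fin d) ℝ) (hSv : Sv.PosDef) (lam : ℝ) (hlam : 0 ≤ lam)
    (G : Matrix (Fin d) (Fin d) ℝ) (hG : G.IsHermitian) (l : ℝ) (hl : 0 < l) :
    let ξt : Fin n → Fin d → ℝ := fun i => pdInvSqrt hSv *ᵥ ξ i
    let St : Matrix (Fin d) (Fin d) ℝ :=
      (1 / (n : ℝ)) • ∑ i, Matrix.vecMulVec (ξt i) (ξt i)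
    let Sξ : Matrix (Fin d) (Fin d) ℝ :=
      (1 / (n : ℝ)) • ∑ i, Matrix.vecMulVec (ξ i) (ξ i)
    l ≤ lamMin St → matOpNorm G ≤ (l + lam / matOpNorm Sv) / 2 →
      IsUnit (Sξ + lam • 1) ∧ IsUnit (St + lam • Sv⁻¹ + G) ∧
        matOpNorm (pdInvSqrt hSv * (St + lam • Sv⁻¹ + G)⁻¹ * pdInvSqrt hSv -
            (Sξ + lam • 1)⁻¹) ≤
          2 * matOpNorm Sv⁻¹ * matOpNorm G / (l ^ 2 + lam ^ 2 / matOpNorm Sv ^ 2) :=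
  stmt4_general ξ Sv hSv lam hlam G l hl
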